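/- Let X be a Hausdorff space which admits a continuous weak selection and is totally disconnected at a point p ∈ X. If p is the limit of a sequence of points of X \ {p}, then p is a cut point of X. -/

import Mathlib

/-!
A continuous weak selection `σ` on a Hausdorff space makes `wsLT σ` a tournament whose rays are
open. One side of `p`, say the lower ray `L = {z | z < p}`, contains `x n` for infinitely many `n`.
Clopen sets separating `p` from these points, cut down to the rays above them, give a decreasing
sequence of clopen sets `D k` together with points `y k ∈ L ∩ (D k \ D (k + 1))` tending to `p`,
such that `D (k + 1)` lies above `y k`. The union `E` of the even rings `D k \ D (k + 1)` has its
frontier inside `⋂ k, D k`, and no point of `L` lies there: it would lie above every `y k`, hence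
above their limit `p`. So `V = L ∩ E` and `U = (X \ {p}) \ V` share no closure point but `p`, and
`p` is one, as the limit of the `y k` of even and of odd index.
-/

open Set Filter Topology

/-- The hyperspace of all nonempty closed subsets of `X`. -/
def HypF (X : Type*) [TopologicalSpace X] : Type _ :=
  {S : Set X // S.Nonempty ∧ IsClosed S}

variable {X : Type*} [TopologicalSpace X]

namespace HypF

/-- The Vietoris topology on `HypF X`, generated by the canonical basic sets
`⟨𝒱⟩ = {S | S ⊆ ⋃𝒱 ∧ ∀ V ∈ 𝒱, S ∩ V ≠ ∅}` where `𝒱` runs over the finite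
families of open subsets of `X`. -/
instance : TopologicalSpace (HypF X) :=
  TopologicalSpace.generateFrom
    {B : Set (HypF X) | ∃ 𝒱 : Finset (Set X), (∀ V ∈ 𝒱, IsOpen V) ∧
      B = {S : HypF X | S.1 ⊆ (⋃ V ∈ 𝒱, V) ∧ ∀ V ∈ 𝒱, (S.1 ∩ V).Nonempty}}

/-- The hyperspace is partially ordered by set-theoretic inclusion. -/
instance : PartialOrder (HypF X) :=
  PartialOrder.lift Subtype.val Subtype.coe_injective

/-- The whole space `X` as an element of its hyperspace. -/
def top (X : Type*) [TopologicalSpace X] [Nonempty X] : HypF X :=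
  ⟨univ, univ_nonempty, isClosed_univ⟩

/-- The union of two members of the hyperspace. -/
def union (T S : HypF X) : HypF X :=
  ⟨T.1 ∪ S.1, T.2.1.mono subset_union_left, T.2.2.union S.2.2⟩

end HypF

/-- A continuous selection for the Vietoris hyperspace `HypF X`. -/
def IsContinuousSelection (f : HypF X → X) : Prop :=
  Continuous f ∧ ∀ S : HypF X, f S ∈ S.1

/-- `p` is a cut point of `X`: `X \ {p} = U ∪ V` with `cl U ∩ cl V = {p}`. -/
def IsCutPoint (p : X) : Prop :=
  ∃ U V : Set X, ({p}ᶜ : Set X) = U ∪ V ∧ closure U ∩ closure V = {p}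

/-- `p` is a butterfly point of `X`. -/
def IsButterflyPoint (p : X) : Prop :=
  ∃ F G : Set X, IsClosed F ∧ IsClosed G ∧
    closure (F \ {p}) ∩ closure (G \ {p}) = {p}

/-- `X` is totally disconnected at `p`: `{p}` is an intersection of clopen sets. -/
def TotallyDisconnectedAt (p : X) : Prop :=
  ∃ 𝒞 : Set (Set X), (∀ C ∈ 𝒞, IsClopen C) ∧ ⋂₀ 𝒞 = {p}

/-- `y` has a countable base of clopen neighbourhoods in `Y`. -/
def HasCountableClopenBase {Y : Type*} [TopologicalSpace Y] (y : Y) : Prop :=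
  ∃ ℬ : Set (Set Y), ℬ.Countable ∧ (∀ B ∈ ℬ, IsClopen B ∧ y ∈ B) ∧
    ∀ W : Set Y, IsOpen W → y ∈ W → ∃ B ∈ ℬ, B ⊆ W

/-- `p` is countably-approachable: it is isolated, or it has a countable clopen
base in `cl U` for some open `U ⊆ X \ {p}` with `cl U = U ∪ {p}`. -/
def CountablyApproachable (p : X) : Prop :=
  IsOpen ({p} : Set X) ∨
    ∃ U : Set X, IsOpen U ∧ U ⊆ ({p}ᶜ : Set X) ∧ closure U = U ∪ {p} ∧
      ∀ hp : p ∈ closure U, HasCountableClopenBase (⟨p, hp⟩ : closure U)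

/-- `p` is selection maximal: some continuous selection `f` satisfies `f S = p`
whenever `p ∈ S`. -/
def SelectionMaximal (p : X) : Prop :=
  ∃ f : HypF X → X, IsContinuousSelection f ∧ ∀ S : HypF X, p ∈ S.1 → f S = p

/-- `ℬ` is a local base at `p`. -/
def IsLocalBaseAt (p : X) (ℬ : Set (Set X)) : Prop :=
  (∀ B ∈ ℬ, IsOpen B ∧ p ∈ B) ∧
    ∀ W : Set X, IsOpen W → p ∈ W → ∃ B ∈ ℬ, B ⊆ W

/-- `X_Θ`: the set of values `f(X)` of continuous selections for `HypF X`. -/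
def thetaSet (X : Type*) [TopologicalSpace X] [Nonempty X] : Set X :=
  {p | ∃ f : HypF X → X, IsContinuousSelection f ∧ f (HypF.top X) = p}

/-- `X_Ω`: the set of countably-approachable points of `X`. -/
def omegaSet (X : Type*) [TopologicalSpace X] : Set X :=
  {p | CountablyApproachable p}

/-- `X_Θ*`: the selection maximal points of `X_Θ`. -/
def thetaStarSet (X : Type*) [TopologicalSpace X] [Nonempty X] : Set X :=
  {p ∈ thetaSet X | SelectionMaximal p}

/-- `X_Ω*`: the points of `X_Ω` with a countable clopen base in `X`. -/
def omegaStarSet (X : Type*) [TopologicalSpace X] : Set X :=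
  {p ∈ omegaSet X | HasCountableClopenBase p}

/-- `F₂(X)`: the subsets of `X` with at least one and at most two points. -/
def HypF2 (X : Type*) : Type _ := {S : Set X // ∃ x y : X, S = {x, y}}

/-- The Vietoris topology on `HypF2 X`. -/
instance : TopologicalSpace (HypF2 X) :=
  TopologicalSpace.generateFrom
    {B : Set (HypF2 X) | ∃ 𝒱 : Finset (Set X), (∀ V ∈ 𝒱, IsOpen V) ∧
      B = {S : HypF2 X | S.1 ⊆ (⋃ V ∈ 𝒱, V) ∧ ∀ V ∈ 𝒱, (S.1 ∩ V).Nonempty}}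

/-- The unordered pair `{x, y}` as an element of `HypF2 X`. -/
def pairF {X : Type*} (x y : X) : HypF2 X := ⟨{x, y}, x, y, rfl⟩

/-- A weak selection for `X`. -/
def IsWeakSelection {X : Type*} (σ : HypF2 X → X) : Prop := ∀ S : HypF2 X, σ S ∈ S.1

/-- The strict relation `x <_σ y` generated by a weak selection `σ`. -/
def wsLT {X : Type*} (σ : HypF2 X → X) (x y : X) : Prop := σ (pairF x y) = x ∧ x ≠ y

section Rings

variable {α : Type*} {D : ℕ → Set α}

def ringUnion (D : ℕ → Set α) (A : Set ℕ) : Set α := ⋃ k ∈ A, D k \ D (k + 1)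

theorem mem_ringUnion_iff (hD : Antitone D) {A : Set ℕ} {k : ℕ} {z : α}
    (hz : z ∈ D k \ D (k + 1)) : z ∈ ringUnion D A ↔ k ∈ A := by
  refine ⟨fun h => ?_, fun hk => mem_biUnion hk hz⟩
  obtain ⟨j, hj, hzj⟩ := mem_iUnion₂.1 h
  obtain hjk | rfl | hkj := lt_trichotomy j k
  · exact absurd (hD (Nat.succ_le_of_lt hjk) hz.1) hzj.2
  · exact hj
  · exact absurd (hD (Nat.succ_le_of_lt hkj) hzj.1) hz.2

theorem exists_mem_diff_succ (h0 : D 0 = univ) {z : α} (hz : z ∉ ⋂ k, D k) :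
    ∃ k, z ∈ D k \ D (k + 1) := by
  by_contra! h
  refine hz (mem_iInter.2 fun k => ?_)
  induction k with
  | zero => exact h0 ▸ mem_univ z
  | succ k ih => exact not_not.1 fun h' => h k ⟨ih, h'⟩

theorem frontier_ringUnion_subset [TopologicalSpace α] (hD : ∀ k, IsClopen (D k))
    (hanti : Antitone D) (h0 : D 0 = univ) (A : Set ℕ) :
    frontier (ringUnion D A) ⊆ ⋂ k, D k := by
  intro q ⟨hqcl, hqint⟩
  by_contra hq
  obtain ⟨k, hqk⟩ := exists_mem_diff_succ h0 hq
  have hW : IsOpen (D k \ D (k + 1)) := (hD k).isOpen.sdiff (hD (k + 1)).isClosed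
  by_cases hk : k ∈ A
  · exact hqint (interior_maximal (subset_biUnion_of_mem (u := fun k => D k \ D (k + 1)) hk)
      hW hqk)
  · obtain ⟨z, hzk, hzA⟩ := mem_closure_iff.1 hqcl _ hW hqk
    exact hk ((mem_ringUnion_iff hanti hzk).1 hzA)

end Rings

theorem TotallyDisconnectedAt.exists_isClopen {p z : X} (h : TotallyDisconnectedAt p)
    (hz : z ≠ p) : ∃ C, IsClopen C ∧ p ∈ C ∧ z ∉ C := by
  obtain ⟨𝒞, hclo, hint⟩ := h
  have hz' : z ∉ ⋂₀ 𝒞 := by rw [hint]; exact hz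
  obtain ⟨C, hC, hzC⟩ := not_forall₂.1 hz'
  exact ⟨C, hclo C hC, (hint ▸ mem_singleton p : p ∈ ⋂₀ 𝒞) C hC, hzC⟩

structure IsOpenTournament (r : X → X → Prop) : Prop where
  asymm {a b : X} : r a b → ¬ r b a
  total {a b : X} : a ≠ b → r a b ∨ r b a
  isOpen_lt (a : X) : IsOpen {z | r z a}
  isOpen_gt (a : X) : IsOpen {z | r a z}

namespace IsOpenTournament

variable {r : X → X → Prop}

theorem swap (hr : IsOpenTournament r) : IsOpenTournament (fun a b => r b a) where
  asymm h := hr.asymm h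
  total h := (hr.total h).symm
  isOpen_lt := hr.isOpen_gt
  isOpen_gt := hr.isOpen_lt

theorem ne_of_rel (hr : IsOpenTournament r) {a b : X} (h : r a b) : a ≠ b := by
  rintro rfl
  exact hr.asymm h h

theorem rel_of_mem_closure_lt (hr : IsOpenTournament r) {a z : X}
    (hz : z ∈ closure {w | r w a}) (hne : z ≠ a) : r z a := by
  refine (hr.total hne).resolve_right fun haz => ?_
  obtain ⟨w, hwa, hw⟩ := mem_closure_iff.1 hz _ (hr.isOpen_gt a) haz
  exact hr.asymm hw hwa

theorem isClopen_setOf_gt_inter (hr : IsOpenTournament r) {C : Set X} (hC : IsClopen C)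
    {a : X} (ha : a ∉ C) : IsClopen ({z | r a z} ∩ C) := by
  refine ⟨isClosed_of_closure_subset fun z hz => ?_, (hr.isOpen_gt a).inter hC.isOpen⟩
  obtain ⟨hzr, hzC⟩ := closure_inter_subset_inter_closure _ _ hz
  rw [hC.isClosed.closure_eq] at hzC
  exact ⟨hr.swap.rel_of_mem_closure_lt hzr fun h => ha (h ▸ hzC), hzC⟩

theorem isCutPoint_of_rings (hr : IsOpenTournament r) {p : X} {D : ℕ → Set X} {y : ℕ → X}
    (hD : ∀ k, IsClopen (D k)) (hanti : Antitone D) (h0 : D 0 = univ)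
    (hy : Tendsto y atTop (𝓝 p)) (hyp : ∀ k, r (y k) p) (hyD : ∀ k, y k ∈ D k \ D (k + 1))
    (hDy : ∀ k, D (k + 1) ⊆ {z | r (y k) z}) :
    IsCutPoint p := by
  set L := {z | r z p}
  set E := ringUnion D {k | Even k}
  have hyE (k : ℕ) : y k ∈ E ↔ Even k := mem_ringUnion_iff hanti (hyD k)
  refine ⟨{p}ᶜ \ (L ∩ E), L ∩ E, (sdiff_union_of_subset fun z hz => hr.ne_of_rel hz.1).symm,
    Subset.antisymm ?_ (singleton_subset_iff.2 ⟨?_, ?_⟩)⟩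
  · rintro q ⟨hqU, hqV⟩
    by_contra hqp
    have hqL : r q p := hr.rel_of_mem_closure_lt (closure_mono inter_subset_left hqV) hqp
    have hqEc : q ∈ closure Eᶜ := by
      have hU : {p}ᶜ \ (L ∩ E) ⊆ Lᶜ ∪ Eᶜ := fun z hz => not_and_or.1 hz.2
      have := closure_mono hU hqU
      rw [closure_union, (hr.isOpen_lt p).isClosed_compl.closure_eq] at this
      exact this.resolve_left (not_not.2 hqL)
    have hqE : q ∈ frontier E := by
      rw [frontier_eq_closure_inter_closure]
      exact ⟨closure_mono inter_subset_right hqV, hqEc⟩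
    have hqD : q ∈ ⋂ k, D k := frontier_ringUnion_subset hD hanti h0 _ hqE
    -- `q` lies above every `y k`, yet `{z | r q z}` is a neighbourhood of their limit `p`.
    obtain ⟨k, hk⟩ := (hy.eventually ((hr.isOpen_gt q).mem_nhds hqL)).exists
    exact hr.asymm (hDy k (mem_iInter.1 hqD (k + 1))) hk
  · have hodd : Tendsto (fun k => y (2 * k + 1)) atTop (𝓝 p) :=
      hy.comp (tendsto_atTop_mono (fun k => by dsimp only [id]; omega) tendsto_id)
    exact mem_closure_of_tendsto hodd (Eventually.of_forall fun k =>
      ⟨hr.ne_of_rel (hyp _), fun h => Nat.not_even_two_mul_add_one k ((hyE _).1 h.2)⟩)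
  · have heven : Tendsto (fun k => y (2 * k)) atTop (𝓝 p) :=
      hy.comp (tendsto_atTop_mono (fun k => by dsimp only [id]; omega) tendsto_id)
    exact mem_closure_of_tendsto heven (Eventually.of_forall fun k =>
      ⟨hyp _, (hyE _).2 (even_two_mul k)⟩)

theorem exists_clopen_rings (hr : IsOpenTournament r) {p : X} (htd : TotallyDisconnectedAt p)
    {x : ℕ → X} (hlim : Tendsto x atTop (𝓝 p)) (hfreq : ∃ᶠ n in atTop, r (x n) p) :
    ∃ (D : ℕ → Set X) (y : ℕ → X), (∀ k, IsClopen (D k)) ∧ Antitone D ∧ D 0 = univ ∧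
      Tendsto y atTop (𝓝 p) ∧ ∀ k, r (y k) p ∧ y k ∈ D k \ D (k + 1) ∧
        D (k + 1) ⊆ {z | r (y k) z} := by
  let State := {s : ℕ × Set X // IsClopen s.2 ∧ p ∈ s.2}
  have hstep (s : State) : ∃ t : State, s.1.1 < t.1.1 ∧ r (x t.1.1) p ∧ x t.1.1 ∈ s.1.2 ∧
      t.1.2 ⊆ s.1.2 ∩ {z | r (x t.1.1) z} := by
    obtain ⟨⟨N, D⟩, hD, hpD⟩ := s
    obtain ⟨n, hnp, hnD, hNn⟩ := (hfreq.and_eventually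
      ((hlim.eventually_mem (hD.isOpen.mem_nhds hpD)).and (eventually_gt_atTop N))).exists
    obtain ⟨C, hC, hpC, hnC⟩ := htd.exists_isClopen (hr.ne_of_rel hnp)
    exact ⟨⟨(n, D ∩ ({z | r (x n) z} ∩ C)), hD.inter (hr.isClopen_setOf_gt_inter hC hnC),
      hpD, hnp, hpC⟩, hNn, hnp, hnD, inter_subset_inter_right _ inter_subset_left⟩
  choose next hnext using hstep
  let s : ℕ → State := fun k => next^[k] ⟨(0, univ), isClopen_univ, mem_univ p⟩
  have hs (k : ℕ) : s (k + 1) = next (s k) := Function.iterate_succ_apply' _ _ _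
  have hindex : StrictMono fun k => (s (k + 1)).1.1 := strictMono_nat_of_lt_succ fun k => by
    simpa only [hs (k + 1)] using (hnext (s (k + 1))).1
  refine ⟨fun k => (s k).1.2, fun k => x (s (k + 1)).1.1, fun k => (s k).2.1,
    antitone_nat_of_succ_le fun k => ?_, rfl, hlim.comp hindex.tendsto_atTop, fun k => ?_⟩
  · rw [hs k]
    exact (hnext (s k)).2.2.2.trans inter_subset_left
  · obtain ⟨-, hp, hmem, hsub⟩ := hnext (s k)
    simp only [hs k]
    exact ⟨hp, ⟨hmem, fun h => hr.ne_of_rel (hsub h).2 rfl⟩, hsub.trans inter_subset_right⟩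

theorem isCutPoint_of_frequently (hr : IsOpenTournament r) {p : X}
    (htd : TotallyDisconnectedAt p) {x : ℕ → X} (hlim : Tendsto x atTop (𝓝 p))
    (hfreq : ∃ᶠ n in atTop, r (x n) p) : IsCutPoint p := by
  obtain ⟨D, y, hD, hanti, h0, hy, hyD⟩ := hr.exists_clopen_rings htd hlim hfreq
  exact hr.isCutPoint_of_rings hD hanti h0 hy (fun k => (hyD k).1) (fun k => (hyD k).2.1)
    fun k => (hyD k).2.2

end IsOpenTournament

theorem pairF_comm {α : Type*} (a b : α) : pairF a b = pairF b a :=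
  Subtype.ext (pair_comm a b)

theorem continuous_pairF (a : X) : Continuous (pairF a) := by
  refine continuous_generateFrom_iff.2 ?_
  rintro _ ⟨𝒱, h𝒱, rfl⟩
  have hpre : pairF a ⁻¹' {S | S.1 ⊆ ⋃ V ∈ 𝒱, V ∧ ∀ V ∈ 𝒱, (S.1 ∩ V).Nonempty} =
      ({_z | a ∈ ⋃ V ∈ 𝒱, V} ∩ ⋃ V ∈ 𝒱, V) ∩ ⋂ V ∈ 𝒱, ({_z | a ∈ V} ∪ V) := by
    ext z
    simp [pairF, insert_subset_iff, inter_nonempty, or_and_right, exists_or]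
  rw [hpre]
  exact (isOpen_const.inter (isOpen_biUnion h𝒱)).inter
    (isOpen_biInter_finset fun V hV => isOpen_const.union (h𝒱 V hV))

theorem IsWeakSelection.eq_or_eq {α : Type*} {σ : HypF2 α → α} (hσ : IsWeakSelection σ)
    (a b : α) : σ (pairF a b) = a ∨ σ (pairF a b) = b :=
  hσ (pairF a b)

theorem isOpenTournament_wsLT [T2Space X] {σ : HypF2 X → X} (hσ : IsWeakSelection σ)
    (hσc : Continuous σ) : IsOpenTournament (wsLT σ) where
  asymm := by
    rintro a b ⟨hab, hne⟩ ⟨hba, -⟩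
    rw [pairF_comm] at hba
    exact hne (hab.symm.trans hba)
  total {a b} hne := by
    rcases hσ.eq_or_eq a b with h | h
    · exact Or.inl ⟨h, hne⟩
    · exact Or.inr ⟨pairF_comm a b ▸ h, hne.symm⟩
  isOpen_lt a := by
    have hray : {z | wsLT σ z a} = {z | σ (pairF a z) ≠ a} := by
      ext z
      rw [mem_ofPred_eq, mem_ofPred_eq, wsLT, pairF_comm]
      rcases hσ.eq_or_eq a z with h | h <;> rw [h] <;> tauto
    exact hray ▸ isOpen_ne_fun (hσc.comp (continuous_pairF a)) continuous_const
  isOpen_gt a := by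
    have hray : {z | wsLT σ a z} = {z | σ (pairF a z) ≠ z} := by
      ext z
      rw [mem_ofPred_eq, mem_ofPred_eq, wsLT]
      rcases hσ.eq_or_eq a z with h | h <;> rw [h] <;> tauto
    exact hray ▸ isOpen_ne_fun (hσc.comp (continuous_pairF a)) continuous_id

/-- If `X` has a continuous weak selection, is totally
disconnected at `p`, and `p` is the limit of a sequence of points of
`X \ {p}`, then `p` is a cut point of `X`. -/
theorem statement11 (X : Type*) [TopologicalSpace X] [T2Space X]
    (σ : HypF2 X → X) (hσ : IsWeakSelection σ) (hσc : Continuous σ)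
    (p : X) (htd : TotallyDisconnectedAt p)
    (x : ℕ → X) (hx : ∀ n, x n ∈ ({p}ᶜ : Set X)) (hlim : Tendsto x atTop (𝓝 p)) :
    IsCutPoint p := by
  have hr := isOpenTournament_wsLT hσ hσc
  have hside : ∃ᶠ n in atTop, wsLT σ (x n) p ∨ wsLT σ p (x n) :=
    Frequently.of_forall fun n => hr.total (hx n)
  rcases frequently_or_distrib.1 hside with hbelow | habove
  · exact hr.isCutPoint_of_frequently htd hlim hbelow
  · exact hr.swap.isCutPoint_of_frequently htd hlim habove
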